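/- arXiv:2512.21427 — 3 statements merged into one kernel-verified Lean document; each statement's English description precedes it below -/
import Mathlib

section
/- In GL_2(F_3), every cyclic subgroup of order 8 intersects every subgroup isomorphic to the symmetric group S_3 trivially. -/
open Matrix

set_option maxHeartbeats 1000000 in
set_option maxRecDepth 10000 in
private lemma gl2F3_key : ∀ m : Matrix (Fin 2) (Fin 2) (ZMod 3), m^8 = 1 → m^4 = 1 ∨ m^4 = -1 := by
  decide

private lemma perm3_central : ∀ p : Equiv.Perm (Fin 3), (∀ q, p * q = q * p) → p = 1 := by
  decide

theorem gl2F3_cyclic8_inter_S3_trivial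
    (C H : Subgroup (GL (Fin 2) (ZMod 3)))
    (hC : IsCyclic C) (hC8 : Nat.card C = 8)
    (hH : Nonempty (H ≃* Equiv.Perm (Fin 3))) :
    C ⊓ H = ⊥ := by
  rw [eq_bot_iff]
  rintro x ⟨hxC, hxH⟩
  rw [Subgroup.mem_bot]
  by_contra hx1
  obtain ⟨e⟩ := hH
  have hfinC : Finite C := Nat.finite_of_card_ne_zero (by omega)
  have hH6 : Nat.card H = 6 := by
    rw [Nat.card_congr e.toEquiv, Nat.card_eq_fintype_card]
    simp [Fintype.card_perm, Nat.factorial]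
  have h8 : orderOf x ∣ 8 := by
    rw [← hC8, ← Subgroup.orderOf_mk x hxC]; exact orderOf_dvd_natCard _
  have h6 : orderOf x ∣ 6 := by
    rw [← hH6, ← Subgroup.orderOf_mk x hxH]; exact orderOf_dvd_natCard _
  have h2 : orderOf x ∣ 2 := by
    have := Nat.dvd_gcd h8 h6
    norm_num at this
    exact this
  have hx2 : x ^ 2 = 1 := orderOf_dvd_iff_pow_eq_one.mp h2
  obtain ⟨g, hg⟩ := hC.exists_generator
  have hg8 : orderOf (g : GL (Fin 2) (ZMod 3)) = 8 := by
    rw [Subgroup.orderOf_coe, ← hC8]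
    exact orderOf_eq_card_of_forall_mem_zpowers hg
  have hgm8 : ((g : GL (Fin 2) (ZMod 3)) : Matrix (Fin 2) (Fin 2) (ZMod 3)) ^ 8 = 1 := by
    have : (g : GL (Fin 2) (ZMod 3)) ^ 8 = 1 := by
      rw [← hg8]; exact pow_orderOf_eq_one _
    calc ((g : GL (Fin 2) (ZMod 3)) : Matrix (Fin 2) (Fin 2) (ZMod 3)) ^ 8
        = (((g : GL (Fin 2) (ZMod 3)) ^ 8 : GL (Fin 2) (ZMod 3)) : Matrix (Fin 2) (Fin 2) (ZMod 3)) := by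
          rw [Units.val_pow_eq_pow_val]
      _ = 1 := by rw [this]; rfl
  have hg4 : (g : GL (Fin 2) (ZMod 3)) ^ 4 = -1 := by
    rcases gl2F3_key _ hgm8 with h | h
    · exfalso
      have : (g : GL (Fin 2) (ZMod 3)) ^ 4 = 1 := Units.ext (by
        rw [Units.val_pow_eq_pow_val, h]; rfl)
      have := orderOf_dvd_of_pow_eq_one this
      rw [hg8] at this
      omega
    · exact Units.ext (by
        rw [Units.val_pow_eq_pow_val, h, Units.val_neg, Units.val_one])
  obtain ⟨k, hk⟩ := (hg ⟨x, hxC⟩)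
  have hxk : x = (g : GL (Fin 2) (ZMod 3)) ^ k := by
    have := congrArg (fun y : C => (y : GL (Fin 2) (ZMod 3))) hk
    simpa using this.symm
  have hzk : (g : GL (Fin 2) (ZMod 3)) ^ (k * 2) = 1 := by
    rw [_root_.zpow_mul]
    have : ((g : GL (Fin 2) (ZMod 3)) ^ k) ^ (2 : ℕ) = 1 := by rw [← hxk]; exact hx2
    rw [← zpow_natCast ((g : GL (Fin 2) (ZMod 3)) ^ k) 2] at this
    exact this
  have h8dvd : (8 : ℤ) ∣ k * 2 := by
    have := orderOf_dvd_iff_zpow_eq_one.mpr hzk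
    rwa [hg8] at this
  obtain ⟨j, hj⟩ : (4 : ℤ) ∣ k := ⟨h8dvd.choose, by have := h8dvd.choose_spec; linarith⟩
  have hxj : x = ((-1 : GL (Fin 2) (ZMod 3))) ^ j := by
    have hg4z : (g : GL (Fin 2) (ZMod 3)) ^ (4 : ℤ) = -1 := by
      rw [show (4:ℤ) = ((4:ℕ):ℤ) from rfl, zpow_natCast, hg4]
    rw [hxk, hj, _root_.zpow_mul, hg4z]
  have hxneg : x = -1 := by
    rcases Int.even_or_odd j with ⟨a, ha⟩ | ⟨a, ha⟩
    · exfalso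
      apply hx1
      rw [hxj, ha, ← two_mul, _root_.zpow_mul,
        show ((-1 : GL (Fin 2) (ZMod 3))) ^ (2:ℤ) = 1 by
          rw [show (2:ℤ) = ((2:ℕ):ℤ) from rfl, zpow_natCast, neg_one_sq],
        _root_.one_zpow]
    · rw [hxj, ha, _root_.zpow_add, _root_.zpow_mul,
        show ((-1 : GL (Fin 2) (ZMod 3))) ^ (2:ℤ) = 1 by
          rw [show (2:ℤ) = ((2:ℕ):ℤ) from rfl, zpow_natCast, neg_one_sq],
        _root_.one_zpow, one_mul, _root_.zpow_one]
  set y : H := ⟨x, hxH⟩ with hy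
  have hcomm : ∀ z : H, y * z = z * y := by
    intro z
    ext
    simp only [Subgroup.coe_mul, hy, hxneg]
    rw [neg_one_mul, mul_neg_one]
  have hey : e y = 1 := by
    apply perm3_central
    intro q
    obtain ⟨z, hz⟩ := e.surjective q
    rw [← hz, ← _root_.map_mul, ← _root_.map_mul, hcomm]
  have : y = 1 := e.injective (by simpa using hey)
  exact hx1 (by simpa [hy] using congrArg (fun y : H => (y : GL (Fin 2) (ZMod 3))) this)
end

section
/- For every subgroup S of GL_2(F_3) isomorphic to S_3, there is exactly one cyclic subgroup of GL_2(F_3) of order 6 that intersects S nontrivially. -/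
open Matrix

private abbrev G2 := GL (Fin 2) (ZMod 3)

set_option maxRecDepth 10000 in
private lemma key_matrix : ∀ t a : Matrix (Fin 2) (Fin 2) (ZMod 3),
    t*t=1 ∧ a*a*a=1 ∧ t*a=a*t ∧ t≠1 ∧ a≠1 → t = -1 := by decide

private lemma perm_central : ∀ σ : Equiv.Perm (Fin 3), (∀ τ, σ*τ = τ*σ) → σ = 1 := by decide

private lemma perm_cases : ∀ σ : Equiv.Perm (Fin 3), σ ≠ 1 → σ*σ = 1 ∨ σ*σ*σ = 1 := by decide

private lemma perm_three : ∀ u v : Equiv.Perm (Fin 3), u*u*u = 1 → u ≠ 1 → v*v*v = 1 → v ≠ 1 →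
    (v = u ∨ v = u*u) := by decide

private lemma key_GL (t a : G2) (ht : t*t = 1) (ha : a*a*a = 1)
    (hc : t*a = a*t) (ht1 : t ≠ 1) (ha1 : a ≠ 1) : t = -1 := by
  apply Units.ext
  rw [Units.val_neg, Units.val_one]
  refine key_matrix t.val a.val ⟨?_, ?_, ?_, ?_, ?_⟩
  · rw [← Units.val_mul, ht, Units.val_one]
  · rw [← Units.val_mul, ← Units.val_mul, ha, Units.val_one]
  · rw [← Units.val_mul, ← Units.val_mul, hc]
  · intro h; exact ht1 (Units.ext (by rw [h, Units.val_one]))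
  · intro h; exact ha1 (Units.ext (by rw [h, Units.val_one]))

private lemma pow3_eq_neg_one {g : G2} (hg : orderOf g = 6) : g^3 = -1 := by
  have h6 : g ^ (6:ℕ) = 1 := by rw [← hg]; exact pow_orderOf_eq_one g
  refine key_GL (g^3) (g^2) ?_ ?_ ?_ ?_ ?_
  · rw [← pow_add]; exact h6
  · rw [← pow_add, ← pow_add]; exact h6
  · rw [← pow_add, ← pow_add]
  · intro h
    have := orderOf_dvd_of_pow_eq_one h
    rw [hg] at this; omega
  · intro h
    have := orderOf_dvd_of_pow_eq_one h
    rw [hg] at this; omega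

private lemma isCyclic_zpowers {G : Type*} [Group G] (g : G) :
    IsCyclic (Subgroup.zpowers g) := by
  refine ⟨⟨⟨g, Subgroup.mem_zpowers g⟩, fun x => ?_⟩⟩
  obtain ⟨k, hk⟩ := Subgroup.mem_zpowers_iff.mp x.2
  exact Subgroup.mem_zpowers_iff.mpr ⟨k, Subtype.ext (by simpa using hk)⟩

theorem gl2F3_unique_C6_meeting_S3
    (S : Subgroup (GL (Fin 2) (ZMod 3)))
    (hS : Nonempty (S ≃* Equiv.Perm (Fin 3))) :
    Nat.card {C : Subgroup (GL (Fin 2) (ZMod 3)) //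
      IsCyclic C ∧ Nat.card C = 6 ∧ C ⊓ S ≠ ⊥} = 1 := by
  obtain ⟨e⟩ := hS
  haveI : Fact (Nat.Prime 2) := ⟨by norm_num⟩
  haveI : Fact (Nat.Prime 3) := ⟨by norm_num⟩
  -- -1 ≠ 1 in G2
  have hne : (-1 : G2) ≠ 1 := by
    intro h
    have := congrArg Units.val h
    rw [Units.val_neg, Units.val_one] at this
    exact absurd this (by decide)
  -- -1 ∉ S
  have hnS : (-1 : G2) ∉ S := by
    intro h
    have hz : ∀ τ : Equiv.Perm (Fin 3), e ⟨-1, h⟩ * τ = τ * e ⟨-1, h⟩ := by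
      intro τ
      obtain ⟨w, rfl⟩ := e.surjective τ
      rw [← _root_.map_mul, ← _root_.map_mul]
      congr 1
      exact Subtype.ext (by simpa using (by rw [neg_one_mul, mul_neg_one] :
        (-1 : G2) * (w : G2) = (w : G2) * (-1 : G2)))
    have h1 : e ⟨-1, h⟩ = 1 := perm_central _ hz
    have h2 : (⟨-1, h⟩ : S) = 1 := e.injective (by rw [h1, _root_.map_one])
    exact hne (by simpa using congrArg Subtype.val h2)
  -- transfer lemmas
  have trans_cases : ∀ x : G2, x ∈ S → x ≠ 1 → x*x = 1 ∨ x*x*x = 1 := by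
    intro x hx hx1
    have hxs : (⟨x, hx⟩ : S) ≠ 1 := fun h => hx1 (by simpa using congrArg Subtype.val h)
    have hes : e ⟨x, hx⟩ ≠ 1 := fun h => hxs (e.injective (by rw [h, _root_.map_one]))
    rcases perm_cases _ hes with h | h
    · left
      have : (⟨x, hx⟩ : S) * ⟨x, hx⟩ = 1 := e.injective (by rw [_root_.map_mul, _root_.map_one]; exact h)
      simpa using congrArg Subtype.val this
    · right
      have : (⟨x, hx⟩ : S) * ⟨x, hx⟩ * ⟨x, hx⟩ = 1 :=
        e.injective (by rw [_root_.map_mul, _root_.map_mul, _root_.map_one]; exact h)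
      simpa using congrArg Subtype.val this
  have trans_three : ∀ x y : G2, x ∈ S → y ∈ S → x*x*x = 1 → x ≠ 1 → y*y*y = 1 → y ≠ 1 →
      y = x ∨ y = x*x := by
    intro x y hx hy hx3 hx1 hy3 hy1
    have hxs3 : e ⟨x, hx⟩ * e ⟨x, hx⟩ * e ⟨x, hx⟩ = 1 := by
      rw [← _root_.map_mul, ← _root_.map_mul, ← _root_.map_one e]
      exact congrArg e (Subtype.ext (by simpa using hx3))
    have hys3 : e ⟨y, hy⟩ * e ⟨y, hy⟩ * e ⟨y, hy⟩ = 1 := by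
      rw [← _root_.map_mul, ← _root_.map_mul, ← _root_.map_one e]
      exact congrArg e (Subtype.ext (by simpa using hy3))
    have hxs1 : e ⟨x, hx⟩ ≠ 1 := fun h => hx1 (by
      have h2 : (⟨x, hx⟩ : S) = 1 := e.injective (by rw [h, _root_.map_one])
      simpa using congrArg Subtype.val h2)
    have hys1 : e ⟨y, hy⟩ ≠ 1 := fun h => hy1 (by
      have h2 : (⟨y, hy⟩ : S) = 1 := e.injective (by rw [h, _root_.map_one])
      simpa using congrArg Subtype.val h2)
    rcases perm_three _ _ hxs3 hxs1 hys3 hys1 with h | h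
    · left
      have := e.injective h
      simpa using congrArg Subtype.val this
    · right
      have := e.injective (h.trans (_root_.map_mul e ⟨x, hx⟩ ⟨x, hx⟩).symm)
      simpa using congrArg Subtype.val this
  -- the order-3 element of S
  set c : Equiv.Perm (Fin 3) := finRotate 3 with hc
  have hc3 : c * c * c = 1 := by decide
  have hc1 : c ≠ 1 := by decide
  set a' : G2 := ((e.symm c : S) : G2) with ha'
  have ha'S : a' ∈ S := (e.symm c).2
  have ha'3 : a' * a' * a' = 1 := by
    have : (e.symm c) * (e.symm c) * (e.symm c) = 1 := by
      rw [← _root_.map_mul, ← _root_.map_mul, ← _root_.map_one e.symm]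
      exact congrArg e.symm hc3
    simpa using congrArg Subtype.val this
  have ha'1 : a' ≠ 1 := by
    intro h
    apply hc1
    have h1 : (e.symm c : S) = 1 := Subtype.ext (ha' ▸ h)
    rw [← _root_.map_one e.symm] at h1
    exact e.symm.injective h1
  have ha'pow3 : a' ^ 3 = 1 := by rw [pow_succ, pow_two]; exact ha'3
  have hoa' : orderOf a' = 3 := orderOf_eq_prime ha'pow3 ha'1
  have hneg2 : orderOf (-1 : G2) = 2 := orderOf_eq_prime neg_one_sq hne
  have hcomm : Commute (-1 : G2) a' := by
    unfold Commute SemiconjBy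
    rw [neg_one_mul, mul_neg_one]
  set g0 : G2 := (-1) * a' with hg0
  have hog0 : orderOf g0 = 6 := by
    rw [hg0, hcomm.orderOf_mul_eq_mul_orderOf_of_coprime (by rw [hneg2, hoa']; norm_num),
      hneg2, hoa']
  set C₀ : Subgroup G2 := Subgroup.zpowers g0 with hC₀def
  have hg04 : g0 ^ (4:ℕ) = a' := by
    rw [hg0, hcomm.mul_pow]
    rw [show ((-1 : G2)) ^ (4:ℕ) = 1 by rw [show (4:ℕ) = 2*2 from rfl, pow_mul, neg_one_sq, one_pow]]
    rw [one_mul, pow_succ, ha'pow3, one_mul]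
  have hg03 : g0 ^ (3:ℕ) = -1 := by
    rw [hg0, hcomm.mul_pow, ha'pow3, mul_one, pow_succ, neg_one_sq, one_mul]
  have ha'C₀ : a' ∈ C₀ := hg04 ▸ C₀.pow_mem (Subgroup.mem_zpowers g0) 4
  have hnegC₀ : (-1 : G2) ∈ C₀ := hg03 ▸ C₀.pow_mem (Subgroup.mem_zpowers g0) 3
  have hC₀cyc : IsCyclic C₀ := isCyclic_zpowers g0
  have hC₀card : Nat.card C₀ = 6 := by rw [hC₀def, Nat.card_zpowers, hog0]
  have hC₀meet : C₀ ⊓ S ≠ ⊥ := by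
    rw [Subgroup.ne_bot_iff_exists_ne_one]
    refine ⟨⟨a', Subgroup.mem_inf.mpr ⟨ha'C₀, ha'S⟩⟩, fun h => ha'1 ?_⟩
    simpa using congrArg Subtype.val h
  -- uniqueness
  have main : ∀ C : Subgroup G2, IsCyclic C → Nat.card C = 6 → C ⊓ S ≠ ⊥ → C = C₀ := by
    intro C hCyc hCard hMeet
    obtain ⟨⟨g, hgC⟩, hgen⟩ := hCyc.exists_generator
    have hCg : C = Subgroup.zpowers g := by
      ext x
      constructor
      · intro hx
        obtain ⟨k, hk⟩ := Subgroup.mem_zpowers_iff.mp (hgen ⟨x, hx⟩)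
        exact Subgroup.mem_zpowers_iff.mpr ⟨k, by simpa using congrArg Subtype.val hk⟩
      · intro hx
        obtain ⟨k, hk⟩ := Subgroup.mem_zpowers_iff.mp hx
        exact hk ▸ C.zpow_mem hgC k
    have hog : orderOf g = 6 := by rw [← Nat.card_zpowers, ← hCg]; exact hCard
    have h6 : g ^ (6:ℕ) = 1 := by rw [← hog]; exact pow_orderOf_eq_one g
    have h3 : g ^ (3:ℕ) = -1 := pow3_eq_neg_one hog
    obtain ⟨⟨x, hxCS⟩, hx1'⟩ := Subgroup.ne_bot_iff_exists_ne_one.mp hMeet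
    have hxC : x ∈ C := (Subgroup.mem_inf.mp hxCS).1
    have hxS : x ∈ S := (Subgroup.mem_inf.mp hxCS).2
    have hx1 : x ≠ 1 := fun h => hx1' (Subtype.ext (by simpa using h))
    -- x = g^n with n < 6
    obtain ⟨n, hn6, rfl⟩ : ∃ n : ℕ, n < 6 ∧ g ^ n = x := by
      rw [hCg] at hxC
      obtain ⟨k, hk⟩ := Subgroup.mem_zpowers_iff.mp hxC
      refine ⟨(k % 6).toNat, ?_, ?_⟩
      · have h0 : (0:ℤ) ≤ k % 6 := Int.emod_nonneg k (by norm_num)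
        have hlt : k % 6 < 6 := Int.emod_lt_of_pos k (by norm_num)
        omega
      · have hmod : g ^ (k % (orderOf g : ℤ)) = g ^ k := zpow_mod_orderOf g k
        rw [hog] at hmod
        rw [← zpow_natCast, Int.toNat_of_nonneg (Int.emod_nonneg k (by norm_num))]
        push_cast at hmod ⊢
        rw [hmod, hk]
    have hn0 : n ≠ 0 := by
      intro h
      subst h
      exact hx1 (pow_zero g)
    rcases trans_cases _ hxS hx1 with h2 | h3'
    · -- x an involution: x = g^3 = -1 ∈ S, contradiction
      exfalso
      have : g ^ (n + n) = 1 := by rw [pow_add]; exact h2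
      have hdvd : (6:ℕ) ∣ n + n := hog ▸ orderOf_dvd_of_pow_eq_one this
      have hn3 : n = 3 := by omega
      subst hn3
      exact hnS (h3 ▸ hxS)
    · -- x has order 3
      have : g ^ (n + n + n) = 1 := by rw [pow_add, pow_add]; exact h3'
      have hdvd : (6:ℕ) ∣ n + n + n := hog ▸ orderOf_dvd_of_pow_eq_one this
      have hn24 : n = 2 ∨ n = 4 := by omega
      rcases trans_three a' (g ^ n) ha'S hxS ha'3 ha'1 h3' hx1 with hx | hx
      all_goals {
        have hxC₀ : g ^ n ∈ C₀ := by
          rw [hx]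
          first
          | exact ha'C₀
          | exact mul_mem ha'C₀ ha'C₀
        have hg4 : g ^ (4:ℕ) ∈ C₀ := by
          rcases hn24 with h | h
          · subst h
            have : g ^ (4:ℕ) = g ^ 2 * g ^ 2 := by rw [← pow_add]
            rw [this]
            exact mul_mem hxC₀ hxC₀
          · subst h
            exact hxC₀
        have hgC₀ : g ∈ C₀ := by
          have hgeq : g = g ^ (3:ℕ) * g ^ (4:ℕ) := by
            rw [← pow_add, show (3+4 : ℕ) = 6 + 1 from rfl, pow_add, h6, one_mul, pow_one]
          rw [hgeq]
          exact mul_mem (h3 ▸ hnegC₀) hg4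
        have hle : C ≤ C₀ := by
          rw [hCg]
          exact Subgroup.zpowers_le.mpr hgC₀
        exact Subgroup.eq_of_le_of_card_ge hle (by rw [hCard, hC₀card])
      }
  -- conclude
  rw [Nat.card_eq_one_iff_unique]
  constructor
  · constructor
    intro ⟨C1, h1a, h1b, h1c⟩ ⟨C2, h2a, h2b, h2c⟩
    exact Subtype.ext ((main C1 h1a h1b h1c).trans (main C2 h2a h2b h2c).symm)
  · exact ⟨⟨C₀, hC₀cyc, hC₀card, hC₀meet⟩⟩
end

section
/- Let f be a separable polynomial of degree n over a field F of characteristic different from 2, with splitting field E and roots r_1, ..., r_n in E. If the image of the Galois group Gal(E/F) under its permutation action on the roots is contained in the alternating group A_n, then the discriminant of f, disc(f) = (leading coeff)^{2n-2} · ∏_{i<j} (r_i - r_j)², is a square in F. -/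
open Polynomial Finset

lemma prod_pairs_aux {E : Type*} [CommRing E] {n : ℕ} (g : Fin n → Fin n → E) :
    ∏ p ∈ Finset.univ.filter (fun p : Fin n × Fin n => p.1 < p.2), g p.1 p.2 =
      ∏ i : Fin n, ∏ j ∈ Finset.Ioi i, g i j := by
  rw [Finset.prod_filter, Fintype.prod_prod_type]
  refine Finset.prod_congr rfl fun i _ => ?_
  rw [← Finset.prod_filter]
  congr 1
  ext j
  simp

theorem disc_isSquare_of_galois_image_in_alternating
    (F E : Type*) [Field F] [Field E] [Algebra F E]
    (hchar : (2 : F) ≠ 0)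
    (n : ℕ) (hn : 1 ≤ n)
    (f : F[X]) (hsep : f.Separable) (hdeg : f.natDegree = n)
    (hsplit : IsSplittingField F E f)
    (r : Fin n → E) (hr : Function.Injective r)
    (hfact : f.map (algebraMap F E) =
      Polynomial.C (algebraMap F E f.leadingCoeff) *
        ∏ i : Fin n, (Polynomial.X - Polynomial.C (r i)))
    (π : (E ≃ₐ[F] E) →* Equiv.Perm (Fin n))
    (hπ : ∀ (σ : E ≃ₐ[F] E) (i : Fin n), σ (r i) = r (π σ i))
    (halt : ∀ σ : E ≃ₐ[F] E, Equiv.Perm.sign (π σ) = 1) :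
    ∃ c : F, (algebraMap F E c) ^ 2 =
      (algebraMap F E f.leadingCoeff) ^ (2 * n - 2) *
        ∏ p ∈ Finset.univ.filter (fun p : Fin n × Fin n => p.1 < p.2),
          (r p.1 - r p.2) ^ 2 := by
  haveI := hsplit
  haveI : FiniteDimensional F E := IsSplittingField.finiteDimensional E f
  haveI : IsGalois F E := IsGalois.of_separable_splitting_field hsep
  set δ : E := (Matrix.vandermonde r).det with hδ
  -- δ is fixed by every automorphism
  have hfixed : ∀ σ : E ≃ₐ[F] E, σ δ = δ := by
    intro σ
    have h1 : σ δ = ((Matrix.vandermonde r).map σ).det := by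
      exact RingHom.map_det (σ : E →+* E) _
    have h2 : (Matrix.vandermonde r).map σ =
        (Matrix.vandermonde r).submatrix (π σ) id := by
      ext i j
      simp [Matrix.vandermonde, hπ σ i]
    rw [h1, h2, Matrix.det_permute, halt σ]
    simp [hδ]
  -- hence δ is in the image of F
  have hmem : δ ∈ (⊥ : IntermediateField F E) := by
    have htop : IntermediateField.fixedField (⊤ : Subgroup (E ≃ₐ[F] E)) = ⊥ :=
      OrderIso.map_bot (@IsGalois.intermediateFieldEquivSubgroup F _ E _ _ _ _).symm
    rw [← htop]
    exact fun g => hfixed g.1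
  rw [IntermediateField.mem_bot] at hmem
  obtain ⟨d, hd⟩ := hmem
  refine ⟨f.leadingCoeff ^ (n - 1) * d, ?_⟩
  have hprod : ∏ p ∈ Finset.univ.filter (fun p : Fin n × Fin n => p.1 < p.2),
      (r p.1 - r p.2) ^ 2 = δ ^ 2 := by
    rw [hδ, Matrix.det_vandermonde, ← Finset.prod_pow,
      prod_pairs_aux (fun i j => (r i - r j) ^ 2)]
    refine Finset.prod_congr rfl fun i _ => ?_
    rw [← Finset.prod_pow]
    exact Finset.prod_congr rfl fun j _ => by ring
  have h2 : (n - 1) * 2 = 2 * n - 2 := by omega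
  rw [hprod, ← hd, map_mul, map_pow, mul_pow, ← pow_mul, h2]
end
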